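/- Fix β>0, θ∈ℝ, α>0, s>0 and z>0, and let a:(0,∞)→ℝ satisfy a_t ∼ αβ²t² as t→∞ if θ=0, and a_t ∼ α(2θ)^{−2}e^{2β|θ|t} as t→∞ if θ≠0. Then lim_{t→∞} q^θ_t(z, a_{t+s}) / q^θ_{t+s}(a_{t+s}) = e^{−2θ_− z} · m^{α,|θ|}(s,z), where θ_− = max(−θ,0). (This is the pointwise density form of the local limit in the Poisson regime: the conditional law of the CSBP at time s given Z_{t+s}=a_{t+s} converges to the m^{α,|θ|}-h-transform.) -/

import Mathlib

/-!
Since `c̃ = c + 2θ`, the ratio `q^θ_t(z, y) / q^θ_{t+s}(y)` equals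
`z (p_t / p_{t+s}) exp(-z c_t - y (c_t - c_{t+s})) F(z y p_t)` with `p = c c̃` and
`F(x) = ∑ xᵏ / (k! (k+1)!)`. Replacing `θ` by `-θ` swaps `c` and `c̃`, so only the factor
`exp(-z c_t)` sees the sign of `θ`: it contributes `e^{-2θ₋z}`, and the rest is the same for `|θ|`.
For `θ ≥ 0` the growth assumption on `a` says exactly that `a_t p_t → α`, while `c_t → 0`,
`p_t / p_{t+s} → e^{2βθs}` and `(c_t - c_{t+s}) / p_{t+s} → 1 / c_s`. At `y = a_{t+s}` the ratio
therefore tends to `z e^{2βθs} e^{-α/c_s} F(αz e^{2βθs})`, which is the series `m^{α,θ}(s, z)`.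
-/

open MeasureTheory Filter

/-- `c^θ_t` from the paper, with time-scale parameter `β`. -/
noncomputable def cc (β θ t : ℝ) : ℝ :=
  if θ = 0 then 1 / (β * t) else 2 * θ / (Real.exp (2 * β * θ * t) - 1)

/-- `c̃^θ_t` from the paper. -/
noncomputable def cct (β θ t : ℝ) : ℝ :=
  if θ = 0 then 1 / (β * t) else 2 * θ / (1 - Real.exp (-(2 * β * θ * t)))

/-- `u^θ(λ, t)` from the paper. -/
noncomputable def uu (β θ l t : ℝ) : ℝ :=
  if t = 0 then l else l * cc β θ t / (cct β θ t + l)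

/-- entrance density `q^θ_t(x)`. -/
noncomputable def qe (β θ t x : ℝ) : ℝ :=
  cc β θ t * cct β θ t * Real.exp (-(cct β θ t * x))

/-- transition density `q^θ_t(x, y)`. -/
noncomputable def qt (β θ t x y : ℝ) : ℝ :=
  x * cc β θ t * cct β θ t * Real.exp (-((x + y) * cc β θ t) - 2 * θ * y) *
    ∑' k : ℕ, (x * y * cc β θ t * cct β θ t) ^ k /
      ((Nat.factorial k : ℝ) * (Nat.factorial (k + 1) : ℝ))

/-- the space-time harmonic function `m^{α,θ}(t, z)`. -/
noncomputable def mm (β θ α t z : ℝ) : ℝ :=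
  z * Real.exp (-(α / cc β θ t)) *
    ∑' i : ℕ, (α * z) ^ i * Real.exp (((i : ℝ) + 1) * (2 * β * θ * t)) /
      ((Nat.factorial i : ℝ) * (Nat.factorial (i + 1) : ℝ))

/-- the space-time harmonic function `m̃^{α,θ}(t, z)`. -/
noncomputable def mmt (β θ α t z : ℝ) : ℝ :=
  z * Real.exp (2 * θ * z) * Real.exp (-(α / cct β θ t)) *
    ∑' i : ℕ, (α * z) ^ i * Real.exp (-(((i : ℝ) + 1) * (2 * β * θ * t))) /
      ((Nat.factorial i : ℝ) * (Nat.factorial (i + 1) : ℝ))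

open Real Topology
open scoped Nat

/-- `I₁(2√x) / √x`, for the modified Bessel function `I₁`. -/
noncomputable def besselSeries (x : ℝ) : ℝ :=
  ∑' k : ℕ, x ^ k / ((k ! : ℝ) * ((k + 1)! : ℝ))

theorem abs_besselSeries_term_le (x : ℝ) (k : ℕ) :
    |x ^ k / ((k ! : ℝ) * ((k + 1)! : ℝ))| ≤ |x| ^ k / k ! := by
  have hk : (0 : ℝ) < k ! := by positivity
  have hk1 : (1 : ℝ) ≤ (k + 1)! := by exact_mod_cast (k + 1).factorial_pos
  rw [abs_div, abs_pow, abs_of_pos (mul_pos hk (by positivity))]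
  exact div_le_div_of_nonneg_left (by positivity) hk (le_mul_of_one_le_right hk.le hk1)

theorem continuous_besselSeries : Continuous besselSeries := by
  refine continuous_iff_continuousAt.2 fun x => ?_
  have hnear : ∀ᶠ y in 𝓝 x, |y| ≤ |x| + 1 :=
    continuous_abs.continuousAt.eventually (eventually_le_nhds (lt_add_one |x|))
  refine tendsto_tsum_of_dominated_convergence (Real.summable_pow_div_factorial (|x| + 1))
    (fun k => ((continuous_pow k).tendsto x).div_const _) ?_
  filter_upwards [hnear] with y hy k
  exact (abs_besselSeries_term_le y k).trans (by gcongr)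

theorem cc_neg (β θ t : ℝ) : cc β (-θ) t = cct β θ t := by
  by_cases hθ : θ = 0
  · simp [cc, cct, hθ]
  rw [cc, cct, if_neg hθ, if_neg (neg_ne_zero.2 hθ), ← neg_div_neg_eq]
  congr 1 <;> ring_nf

theorem cct_neg (β θ t : ℝ) : cct β (-θ) t = cc β θ t := by
  simpa using (cc_neg β (-θ) t).symm

theorem cct_eq_cc_add {β θ t : ℝ} (hβ : β ≠ 0) (ht : t ≠ 0) : cct β θ t = cc β θ t + 2 * θ := by
  by_cases hθ : θ = 0
  · simp [cc, cct, hθ]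
  rw [cc, cct, if_neg hθ, if_neg hθ, exp_neg]
  have hE : exp (2 * β * θ * t) ≠ 1 := by
    rw [Ne, exp_eq_one_iff]; simp [hβ, hθ, ht]
  have hE' : exp (2 * β * θ * t) - 1 ≠ 0 := sub_ne_zero.2 hE
  have hE'' : 1 - (exp (2 * β * θ * t))⁻¹ ≠ 0 := by
    rw [sub_ne_zero, ne_comm, inv_ne_one]; exact hE
  rw [div_add' _ _ _ hE', div_eq_div_iff hE'' hE']
  field_simp
  ring

theorem cc_pos {β θ t : ℝ} (hβ : 0 < β) (ht : 0 < t) : 0 < cc β θ t := by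
  rw [cc]
  split_ifs with hθ
  · positivity
  rcases lt_or_gt_of_ne hθ with hθ | hθ
  · refine div_pos_of_neg_of_neg (by linarith) (sub_neg.2 (exp_lt_one_iff.2 ?_))
    nlinarith [mul_pos hβ ht]
  · exact div_pos (by linarith) (sub_pos.2 (one_lt_exp_iff.2 (by positivity)))

theorem cct_pos {β θ t : ℝ} (hβ : 0 < β) (ht : 0 < t) : 0 < cct β θ t :=
  cc_neg β θ t ▸ cc_pos hβ ht

theorem cc_zero (β t : ℝ) : cc β 0 t = (β * t)⁻¹ := by simp [cc]

theorem cct_zero (β t : ℝ) : cct β 0 t = (β * t)⁻¹ := by simp [cct]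

theorem cc_of_ne_zero {β θ : ℝ} (t : ℝ) (hθ : θ ≠ 0) :
    cc β θ t = 2 * θ * exp (-(2 * β * θ * t)) / (1 - exp (-(2 * β * θ * t))) := by
  have hE := exp_ne_zero (2 * β * θ * t)
  rw [cc, if_neg hθ, exp_neg, show 1 - (exp (2 * β * θ * t))⁻¹ =
    (exp (2 * β * θ * t) - 1) * (exp (2 * β * θ * t))⁻¹ by field_simp,
    mul_div_mul_right _ _ (inv_ne_zero hE)]

theorem cct_of_ne_zero {β θ : ℝ} (t : ℝ) (hθ : θ ≠ 0) :
    cct β θ t = 2 * θ / (1 - exp (-(2 * β * θ * t))) := by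
  rw [cct, if_neg hθ]

theorem qt_div_qe {β θ t T : ℝ} (z y : ℝ) (hβ : β ≠ 0) (hT : T ≠ 0) :
    qt β θ t z y / qe β θ T y =
      z * (cc β θ t * cct β θ t / (cc β θ T * cct β θ T)) *
        exp (-(z * cc β θ t) - y * (cc β θ t - cc β θ T)) *
        besselSeries (z * y * (cc β θ t * cct β θ t)) := by
  have hexp : exp (-((z + y) * cc β θ t) - 2 * θ * y) =
      exp (-(z * cc β θ t) - y * (cc β θ t - cc β θ T)) * exp (-(cct β θ T * y)) := by
    rw [← exp_add, cct_eq_cc_add hβ hT]; ring_nf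
  have hE := exp_ne_zero (-(cct β θ T * y))
  rw [qt, qe, besselSeries, hexp]
  field_simp

theorem qt_div_qe_abs {β θ t T : ℝ} (z y : ℝ) (hβ : β ≠ 0) (ht : t ≠ 0) (hT : T ≠ 0) :
    qt β θ t z y / qe β θ T y =
      exp (-(2 * max (-θ) 0 * z)) * (qt β |θ| t z y / qe β |θ| T y) := by
  rcases le_or_gt 0 θ with hθ | hθ
  · simp [abs_of_nonneg hθ, hθ]
  rw [abs_of_neg hθ, max_eq_left (by linarith), qt_div_qe z y hβ hT, qt_div_qe z y hβ hT,
    cc_neg, cc_neg, cct_neg, cct_neg, cct_eq_cc_add hβ ht, cct_eq_cc_add hβ hT]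
  rw [show -(z * (cc β θ t + 2 * θ)) - y * (cc β θ t + 2 * θ - (cc β θ T + 2 * θ)) =
    2 * -θ * z + (-(z * cc β θ t) - y * (cc β θ t - cc β θ T)) by ring, exp_add, exp_neg]
  field_simp

theorem mm_eq (β θ α s z : ℝ) :
    mm β θ α s z = z * exp (2 * β * θ * s) * exp (-(α * (cc β θ s)⁻¹)) *
      besselSeries (z * α * exp (2 * β * θ * s)) := by
  have hterm : ∀ i : ℕ, (α * z) ^ i * exp (((i : ℝ) + 1) * (2 * β * θ * s)) /
      ((i ! : ℝ) * ((i + 1)! : ℝ)) =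
      exp (2 * β * θ * s) * ((z * α * exp (2 * β * θ * s)) ^ i / ((i ! : ℝ) * ((i + 1)! : ℝ))) := by
    intro i
    rw [← Nat.cast_succ, exp_nat_mul, pow_succ]
    ring
  rw [mm, besselSeries, tsum_congr hterm, tsum_mul_left, div_eq_mul_inv]
  ring

theorem tendsto_density_ratio {c p y : ℝ → ℝ} {s z M α L : ℝ}
    (hc : Tendsto c atTop (𝓝 0))
    (hp : Tendsto (fun t => p t / p (t + s)) atTop (𝓝 M))
    (hy : Tendsto (fun t => y t * p t) atTop (𝓝 α))
    (hd : Tendsto (fun t => (c t - c (t + s)) / p (t + s)) atTop (𝓝 L))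
    (hp₀ : ∀ᶠ t in atTop, p t ≠ 0) :
    Tendsto (fun t => z * (p t / p (t + s)) * exp (-(z * c t) - y (t + s) * (c t - c (t + s))) *
        besselSeries (z * y (t + s) * p t))
      atTop (𝓝 (z * M * exp (-(α * L)) * besselSeries (z * α * M))) := by
  have hshift : Tendsto (· + s) atTop atTop := tendsto_atTop_add_const_right _ s tendsto_id
  have hyT : Tendsto (fun t => y (t + s) * p (t + s)) atTop (𝓝 α) := hy.comp hshift
  have hlim := ((tendsto_const_nhds (x := z)).mul hp).mul
    (((hc.const_mul z).neg.sub (hyT.mul hd)).rexp) |>.mul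
    ((continuous_besselSeries.tendsto _).comp ((hyT.const_mul z).mul hp))
  simp only [mul_zero, neg_zero, zero_sub] at hlim
  refine hlim.congr' ?_
  filter_upwards [hshift.eventually hp₀] with t ht
  simp only [Function.comp_apply]
  field_simp

theorem tendsto_add_const_div_self (s : ℝ) : Tendsto (fun t => (t + s) / t) atTop (𝓝 1) := by
  have h : Tendsto (fun t : ℝ => 1 + s / t) atTop (𝓝 (1 + 0)) :=
    tendsto_const_nhds.add (tendsto_const_nhds.div_atTop tendsto_id)
  rw [add_zero] at h
  refine h.congr' ?_
  filter_upwards [eventually_ne_atTop 0] with t ht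
  field_simp

theorem tendsto_one_sub_exp_div {κ : ℝ} (hκ : 0 < κ) (s : ℝ) :
    Tendsto (fun t => (1 - exp (-(κ * (t + s)))) / (1 - exp (-(κ * t)))) atTop (𝓝 1) := by
  have he : Tendsto (fun t => exp (-(κ * t))) atTop (𝓝 0) :=
    tendsto_exp_neg_atTop_nhds_zero.comp (tendsto_id.const_mul_atTop hκ)
  have heT := he.comp (tendsto_atTop_add_const_right _ s tendsto_id)
  have h : Tendsto (fun t => (1 - exp (-(κ * (t + s)))) / (1 - exp (-(κ * t)))) atTop
      (𝓝 ((1 - 0) / (1 - 0))) :=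
    (tendsto_const_nhds.sub heT).div (tendsto_const_nhds.sub he) (by norm_num)
  simpa using h

theorem exp_neg_mul_eq_exp_mul_exp_neg_mul (κ s t : ℝ) :
    exp (-(κ * t)) = exp (κ * s) * exp (-(κ * (t + s))) := by
  rw [← exp_add]; ring_nf

theorem one_sub_exp_neg_ne_zero {x : ℝ} (hx : 0 < x) : 1 - exp (-x) ≠ 0 :=
  (sub_pos.2 (exp_lt_one_iff.2 (neg_neg_of_pos hx))).ne'

theorem tendsto_cc_atTop {β θ : ℝ} (hβ : 0 < β) (hθ : 0 ≤ θ) : Tendsto (cc β θ) atTop (𝓝 0) := by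
  rcases hθ.eq_or_lt with rfl | hθ
  · rw [show cc β 0 = fun t => (β * t)⁻¹ from funext (cc_zero β)]
    exact (tendsto_id.const_mul_atTop hβ).inv_tendsto_atTop
  · have he := tendsto_exp_neg_atTop_nhds_zero.comp
      (tendsto_id.const_mul_atTop (by positivity : 0 < 2 * β * θ))
    have h : Tendsto (fun t => 2 * θ * exp (-(2 * β * θ * t)) / (1 - exp (-(2 * β * θ * t))))
        atTop (𝓝 (2 * θ * 0 / (1 - 0))) :=
      (he.const_mul (2 * θ)).div (tendsto_const_nhds.sub he) (by norm_num)
    rw [show cc β θ = _ from funext fun t => cc_of_ne_zero t hθ.ne']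
    simpa using h

theorem tendsto_cc_mul_cct_div_shift {β θ : ℝ} (hβ : 0 < β) (hθ : 0 ≤ θ) (s : ℝ) :
    Tendsto (fun t => cc β θ t * cct β θ t / (cc β θ (t + s) * cct β θ (t + s))) atTop
      (𝓝 (exp (2 * β * θ * s))) := by
  rcases hθ.eq_or_lt with rfl | hθ
  · have h := (tendsto_add_const_div_self s).pow 2
    rw [one_pow] at h
    rw [mul_zero, zero_mul, exp_zero]
    refine h.congr' ?_
    filter_upwards [eventually_gt_atTop 0, eventually_gt_atTop (-s)] with t ht hts
    have hT : 0 < t + s := by linarith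
    rw [cc_zero, cct_zero, cc_zero, cct_zero]
    field_simp
  · have h := ((tendsto_one_sub_exp_div (by positivity : 0 < 2 * β * θ) s).pow 2).const_mul
      (exp (2 * β * θ * s))
    rw [one_pow, mul_one] at h
    refine h.congr' ?_
    filter_upwards [eventually_gt_atTop 0, eventually_gt_atTop (-s)] with t ht hts
    have hT : 0 < t + s := by linarith
    have hshift := exp_neg_mul_eq_exp_mul_exp_neg_mul (2 * β * θ) s t
    have h₁ := one_sub_exp_neg_ne_zero (by positivity : 0 < 2 * β * θ * t)
    have h₂ := one_sub_exp_neg_ne_zero (by positivity : 0 < 2 * β * θ * (t + s))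
    rw [cc_of_ne_zero _ hθ.ne', cct_of_ne_zero _ hθ.ne', cc_of_ne_zero _ hθ.ne',
      cct_of_ne_zero _ hθ.ne', hshift]
    rw [hshift] at h₁
    field_simp

theorem tendsto_cc_sub_cc_div_shift {β θ : ℝ} (hβ : 0 < β) (hθ : 0 ≤ θ) (s : ℝ) :
    Tendsto (fun t => (cc β θ t - cc β θ (t + s)) / (cc β θ (t + s) * cct β θ (t + s))) atTop
      (𝓝 (cc β θ s)⁻¹) := by
  rcases hθ.eq_or_lt with rfl | hθ
  · have h := (tendsto_add_const_div_self s).const_mul (β * s)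
    rw [mul_one] at h
    rw [cc_zero, inv_inv]
    refine h.congr' ?_
    filter_upwards [eventually_gt_atTop 0, eventually_gt_atTop (-s)] with t ht hts
    have hT : 0 < t + s := by linarith
    rw [cc_zero, cct_zero, cc_zero]
    field_simp
    ring
  · have h := (tendsto_one_sub_exp_div (by positivity : 0 < 2 * β * θ) s).const_mul
      ((exp (2 * β * θ * s) - 1) / (2 * θ))
    rw [mul_one] at h
    rw [cc, if_neg hθ.ne', inv_div]
    refine h.congr' ?_
    filter_upwards [eventually_gt_atTop 0, eventually_gt_atTop (-s)] with t ht hts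
    have hT : 0 < t + s := by linarith
    have hshift := exp_neg_mul_eq_exp_mul_exp_neg_mul (2 * β * θ) s t
    have h₁ := one_sub_exp_neg_ne_zero (by positivity : 0 < 2 * β * θ * t)
    have h₂ := one_sub_exp_neg_ne_zero (by positivity : 0 < 2 * β * θ * (t + s))
    rw [cc_of_ne_zero _ hθ.ne', cct_of_ne_zero _ hθ.ne', cc_of_ne_zero _ hθ.ne', hshift]
    rw [hshift] at h₁
    field_simp
    ring

theorem tendsto_mul_cc_mul_cct_zero {β α : ℝ} {a : ℝ → ℝ} (hα : α ≠ 0)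
    (ha : Tendsto (fun t => a t / (α * β ^ 2 * t ^ 2)) atTop (𝓝 1)) :
    Tendsto (fun t => a t * (cc β 0 t * cct β 0 t)) atTop (𝓝 α) := by
  have h := ha.const_mul α
  rw [mul_one] at h
  refine h.congr fun t => ?_
  rw [cc_zero, cct_zero]
  rcases eq_or_ne (β * t) 0 with hβt | hβt
  · rcases mul_eq_zero.1 hβt with h | h <;> simp [h]
  field_simp

theorem tendsto_mul_cc_mul_cct_of_pos {β θ α : ℝ} {a : ℝ → ℝ} (hβ : 0 < β) (hθ : 0 < θ)
    (hα : α ≠ 0)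
    (ha : Tendsto (fun t => a t / (α * ((2 * θ) ^ 2)⁻¹ * exp (2 * β * θ * t))) atTop (𝓝 1)) :
    Tendsto (fun t => a t * (cc β θ t * cct β θ t)) atTop (𝓝 α) := by
  have he := tendsto_exp_neg_atTop_nhds_zero.comp
    (tendsto_id.const_mul_atTop (by positivity : 0 < 2 * β * θ))
  have h : Tendsto (fun t => α * (a t / (α * ((2 * θ) ^ 2)⁻¹ * exp (2 * β * θ * t))) /
      (1 - exp (-(2 * β * θ * t))) ^ 2) atTop (𝓝 (α * 1 / (1 - 0) ^ 2)) :=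
    (ha.const_mul α).div ((tendsto_const_nhds.sub he).pow 2) (by norm_num)
  rw [sub_zero, one_pow, mul_one, div_one] at h
  refine h.congr' ?_
  filter_upwards [eventually_gt_atTop 0] with t ht
  have h₁ := one_sub_exp_neg_ne_zero (by positivity : 0 < 2 * β * θ * t)
  rw [cc_of_ne_zero _ hθ.ne', cct_of_ne_zero _ hθ.ne']
  rw [exp_neg] at h₁ ⊢
  field_simp

theorem tendsto_qt_div_qe_of_nonneg {β θ α : ℝ} (s z : ℝ) {a : ℝ → ℝ} (hβ : 0 < β) (hθ : 0 ≤ θ)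
    (ha : Tendsto (fun t => a t * (cc β θ t * cct β θ t)) atTop (𝓝 α)) :
    Tendsto (fun t => qt β θ t z (a (t + s)) / qe β θ (t + s) (a (t + s))) atTop
      (𝓝 (mm β θ α s z)) := by
  rw [mm_eq]
  refine (tendsto_density_ratio (tendsto_cc_atTop hβ hθ) (tendsto_cc_mul_cct_div_shift hβ hθ s) ha
    (tendsto_cc_sub_cc_div_shift hβ hθ s) ?_).congr' ?_
  · filter_upwards [eventually_gt_atTop 0] with t ht
    exact (mul_pos (cc_pos hβ ht) (cct_pos hβ ht)).ne'
  · filter_upwards [eventually_gt_atTop (-s)] with t ht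
    exact (qt_div_qe z _ hβ.ne' (by linarith)).symm

theorem poisson_regime_local_limit_general (β θ α s z : ℝ) (hβ : 0 < β) (hα : 0 < α)
    (a : ℝ → ℝ)
    (ha0 : θ = 0 →
      Filter.Tendsto (fun t => a t / (α * β ^ 2 * t ^ 2)) Filter.atTop (nhds 1))
    (ha1 : θ ≠ 0 →
      Filter.Tendsto (fun t => a t / (α * ((2 * θ) ^ 2)⁻¹ * Real.exp (2 * β * |θ| * t)))
        Filter.atTop (nhds 1)) :
    Filter.Tendsto (fun t => qt β θ t z (a (t + s)) / qe β θ (t + s) (a (t + s)))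
      Filter.atTop (nhds (Real.exp (-(2 * max (-θ) 0 * z)) * mm β |θ| α s z)) := by
  have ha : Tendsto (fun t => a t * (cc β |θ| t * cct β |θ| t)) atTop (𝓝 α) := by
    rcases eq_or_ne θ 0 with rfl | hθ
    · rw [abs_zero]
      exact tendsto_mul_cc_mul_cct_zero hα.ne' (ha0 rfl)
    · refine tendsto_mul_cc_mul_cct_of_pos hβ (abs_pos.2 hθ) hα.ne' ?_
      simpa only [mul_pow, sq_abs] using ha1 hθ
  refine ((tendsto_qt_div_qe_of_nonneg s z hβ (abs_nonneg θ) ha).const_mul _).congr' ?_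
  filter_upwards [eventually_gt_atTop 0, eventually_gt_atTop (-s)] with t ht hts
  exact (qt_div_qe_abs z _ hβ.ne' ht.ne' (by linarith)).symm

/-- Pointwise density form of the local limit in the Poisson regime: if
`a_t ∼ αβ²t²` (case `θ = 0`) or `a_t ∼ α(2θ)⁻² e^{2β|θ|t}` (case `θ ≠ 0`) as `t → ∞`,
then for `s > 0` and `z > 0`,
`q^θ_t(z, a_{t+s}) / q^θ_{t+s}(a_{t+s}) → e^{-2θ₋z} m^{α,|θ|}(s, z)` as `t → ∞`. -/
theorem poisson_regime_local_limit (β θ α s z : ℝ) (hβ : 0 < β) (hα : 0 < α)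
    (hs : 0 < s) (hz : 0 < z) (a : ℝ → ℝ)
    (ha0 : θ = 0 →
      Filter.Tendsto (fun t => a t / (α * β ^ 2 * t ^ 2)) Filter.atTop (nhds 1))
    (ha1 : θ ≠ 0 →
      Filter.Tendsto (fun t => a t / (α * ((2 * θ) ^ 2)⁻¹ * Real.exp (2 * β * |θ| * t)))
        Filter.atTop (nhds 1)) :
    Filter.Tendsto (fun t => qt β θ t z (a (t + s)) / qe β θ (t + s) (a (t + s)))
      Filter.atTop (nhds (Real.exp (-(2 * max (-θ) 0 * z)) * mm β |θ| α s z)) :=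
  poisson_regime_local_limit_general β θ α s z hβ hα a ha0 ha1
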